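/- arXiv:2502.04546 — 13 statements merged into one kernel-verified Lean document; each statement's English description precedes it below -/
import Mathlib

section
/- Let A be a Frobenius algebra with Nakayama automorphism σ, and let δ: A → A be a derivation. Then the derivation σ⁻¹ ∘ δ ∘ σ differs from δ by an inner derivation of A; explicitly, with x := β⁻¹(δᵀ(β(1))) where β(a)(b) = ⟨a,b⟩, one has δ(a) − σ⁻¹(δ(σ(a))) = xa − ax for all a ∈ A. -/
/-- For a derivation δ of a Frobenius algebra with Nakayama automorphism σ, the
derivation σ⁻¹ ∘ δ ∘ σ differs from δ by the inner derivation given by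
x := β⁻¹(δᵀ(β(1))). -/
theorem nakayama_twisted_derivation_inner
    (k : Type*) [Field k] (A : Type*) [Ring A] [Algebra k A] [FiniteDimensional k A]
    (B : A →ₗ[k] A →ₗ[k] k)
    (hndl : ∀ a : A, (∀ b : A, B a b = 0) → a = 0)
    (hndr : ∀ b : A, (∀ a : A, B a b = 0) → b = 0)
    (hassoc : ∀ a b c : A, B (a * b) c = B a (b * c))
    (σ : A ≃ₐ[k] A) (hσ : ∀ a b : A, B a b = B b (σ a))
    (δ : A →ₗ[k] A) (hder : ∀ a b : A, δ (a * b) = δ a * b + a * δ b)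
    (x : A) (hx : ∀ b : A, B x b = B 1 (δ b)) :
    ∀ a : A, δ a - σ.symm (δ (σ a)) = x * a - a * x := by
  intro a
  have key : ∀ b : A, B (δ a - σ.symm (δ (σ a)) - (x * a - a * x)) b = 0 := by
    intro b
    have e1 : B 1 (δ a * b) = B (δ a) b := by rw [← hassoc, one_mul]
    have e2 : B 1 (a * δ b) = B a (δ b) := by rw [← hassoc, one_mul]
    have hA : B (δ a) b = B x (a * b) - B a (δ b) := by
      have h := hx (a * b)
      rw [hder a b, map_add, e1, e2] at h
      linear_combination -h
    have hB : B (σ.symm (δ (σ a))) b = B b (δ (σ a)) := by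
      have h := hσ (σ.symm (δ (σ a))) b
      rwa [AlgEquiv.apply_symm_apply] at h
    have hC : B (x * a) b = B x (a * b) := hassoc x a b
    have hD : B (a * x) b = B a (δ b) + B b (δ (σ a)) := by
      have h1 : B (a * x) b = B x (b * σ a) := by
        rw [hassoc, hσ a (x * b), hassoc]
      have h2 : B 1 (δ b * σ a) = B (δ b) (σ a) := by rw [← hassoc, one_mul]
      have h3 : B 1 (b * δ (σ a)) = B b (δ (σ a)) := by rw [← hassoc, one_mul]
      have h4 := hx (b * σ a)
      rw [hder b (σ a), map_add, h2, h3] at h4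
      rw [h1, h4, ← hσ a (δ b)]
    simp only [map_sub, LinearMap.sub_apply, hA, hB, hC, hD]
    ring
  have := hndl _ key
  have h0 : δ a - σ.symm (δ (σ a)) - (x * a - a * x) = 0 := this
  exact sub_eq_zero.mp h0
end

section
/- Let A be a Frobenius algebra with Nakayama automorphism σ, and let u: A → A be an algebra endomorphism. Then there exists a unique element jac(u) ∈ A such that ⟨u(a), u(b)⟩ = ⟨jac(u)·a, b⟩ for all a, b ∈ A. -/
/-- Existence and uniqueness of the Nakayama Jacobian of an algebra endomorphism. -/
theorem nakayama_jacobian_exists_unique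
    (k : Type*) [Field k] (A : Type*) [Ring A] [Algebra k A] [FiniteDimensional k A]
    (B : A →ₗ[k] A →ₗ[k] k)
    (hndl : ∀ a : A, (∀ b : A, B a b = 0) → a = 0)
    (hndr : ∀ b : A, (∀ a : A, B a b = 0) → b = 0)
    (hassoc : ∀ a b c : A, B (a * b) c = B a (b * c))
    (u : A →ₐ[k] A) :
    ∃! j : A, ∀ a b : A, B (u a) (u b) = B (j * a) b := by
  have hinj : Function.Injective B := by
    rw [← LinearMap.ker_eq_bot, LinearMap.ker_eq_bot']
    intro m hm
    exact hndl m (fun b => by rw [hm]; simp)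
  have hsurj : Function.Surjective B :=
    (LinearMap.injective_iff_surjective_of_finrank_eq_finrank
      (Subspace.dual_finrank_eq (K := k) (V := A)).symm).mp hinj
  obtain ⟨j, hj⟩ := hsurj (((B 1).comp u.toLinearMap))
  have key : ∀ x : A, B j x = B 1 (u x) := fun x => by
    rw [hj]; rfl
  refine ⟨j, fun a b => ?_, fun j' hj' => ?_⟩
  · rw [hassoc, key, map_mul, ← hassoc, one_mul]
  · have : ∀ x : A, (j' - j) * x = 0 := fun x => by
      refine hndl _ (fun b => ?_)
      have h1 := hj' x b
      have h2 : B (u x) (u b) = B (j * x) b := by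
        rw [hassoc, key, map_mul, ← hassoc, one_mul]
      rw [sub_mul, map_sub, LinearMap.sub_apply, ← h1, h2, sub_self]
    have := this 1
    rw [mul_one, sub_eq_zero] at this
    exact this
end

section
/- Let A be a Frobenius algebra and u, v: A → A algebra automorphisms. Then the Nakayama Jacobians satisfy the chain rule jac(u ∘ v) = jac(v) · v⁻¹(jac(u)). -/
/-- Chain rule for Nakayama Jacobians: jac(u ∘ v) = jac(v) · v⁻¹(jac(u)). -/
theorem nakayama_jacobian_chain_rule
    (k : Type*) [Field k] (A : Type*) [Ring A] [Algebra k A] [FiniteDimensional k A]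
    (B : A →ₗ[k] A →ₗ[k] k)
    (hndl : ∀ a : A, (∀ b : A, B a b = 0) → a = 0)
    (hndr : ∀ b : A, (∀ a : A, B a b = 0) → b = 0)
    (hassoc : ∀ a b c : A, B (a * b) c = B a (b * c))
    (u v : A ≃ₐ[k] A) (ju jv juv : A)
    (hju : ∀ a b : A, B (u a) (u b) = B (ju * a) b)
    (hjv : ∀ a b : A, B (v a) (v b) = B (jv * a) b)
    (hjuv : ∀ a b : A, B (u (v a)) (u (v b)) = B (juv * a) b) :
    juv = jv * v.symm ju := by
  have key : ∀ a b : A, B (juv * a) b = B (jv * v.symm ju * a) b := by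
    intro a b
    have h1 : B (juv * a) b = B (u (v a)) (u (v b)) := (hjuv a b).symm
    have h2 : ju * v a = v (v.symm ju * a) := by
      rw [map_mul, AlgEquiv.apply_symm_apply]
    rw [h1, hju (v a) (v b), h2, hjv, mul_assoc]
  have h3 : juv - jv * v.symm ju = 0 := by
    apply hndl
    intro b
    have := key 1 b
    simp only [mul_one] at this
    simp [map_sub, LinearMap.sub_apply, this]
  exact sub_eq_zero.mp h3
end

section
/- Let A be a Frobenius algebra. An algebra endomorphism u: A → A is an automorphism if and only if its Nakayama Jacobian jac(u) is a unit of A; moreover, when u is an automorphism, jac(u⁻¹) = u(jac(u)⁻¹). -/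
lemma aux_isUnit_of_mulLeft_inj (k : Type*) [Field k] (A : Type*) [Ring A] [Algebra k A]
    [FiniteDimensional k A] {j : A}
    (h : Function.Injective (LinearMap.mulLeft k j)) : IsUnit j := by
  have hsurj := (LinearMap.injective_iff_surjective (f := LinearMap.mulLeft k j)).mp h
  obtain ⟨c, hc⟩ := hsurj 1
  simp only [LinearMap.mulLeft_apply] at hc
  -- hc : j * c = 1
  have hcinj : Function.Injective (LinearMap.mulLeft k c) := by
    intro x y hxy
    simp only [LinearMap.mulLeft_apply] at hxy
    have := congrArg (j * ·) hxy
    simpa [← mul_assoc, hc] using this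
  obtain ⟨d, hd⟩ := (LinearMap.injective_iff_surjective (f := LinearMap.mulLeft k c)).mp hcinj 1
  simp only [LinearMap.mulLeft_apply] at hd
  -- hd : c * d = 1
  have hcj : c * j = 1 := by
    have : j = d := by
      calc j = j * (c * d) := by rw [hd, mul_one]
        _ = (j * c) * d := by rw [mul_assoc]
        _ = d := by rw [hc, one_mul]
    rw [this, hd]
  exact ⟨⟨j, c, hc, hcj⟩, rfl⟩

/-- An endomorphism of a Frobenius algebra is an automorphism iff its Nakayama
Jacobian is a unit; and then jac(u⁻¹) = u(jac(u)⁻¹). -/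
theorem nakayama_jacobian_conjecture
    (k : Type*) [Field k] (A : Type*) [Ring A] [Algebra k A] [FiniteDimensional k A]
    (B : A →ₗ[k] A →ₗ[k] k)
    (hndl : ∀ a : A, (∀ b : A, B a b = 0) → a = 0)
    (hndr : ∀ b : A, (∀ a : A, B a b = 0) → b = 0)
    (hassoc : ∀ a b c : A, B (a * b) c = B a (b * c))
    (u : A →ₐ[k] A) (j : A)
    (hj : ∀ a b : A, B (u a) (u b) = B (j * a) b) :
    (Function.Bijective u ↔ IsUnit j) ∧
      ∀ v : A ≃ₐ[k] A, (∀ a : A, v a = u a) →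
        ∀ jinv : A, (∀ a b : A, B (v.symm a) (v.symm b) = B (jinv * a) b) →
          ∀ jU : Aˣ, (jU : A) = j → jinv = u (((jU⁻¹ : Aˣ) : A)) := by
  constructor
  · constructor
    · rintro ⟨hinj, hsurj⟩
      apply aux_isUnit_of_mulLeft_inj k A
      intro x y hxy
      simp only [LinearMap.mulLeft_apply] at hxy
      have h1 : ∀ b : A, B (u x) (u b) = B (u y) (u b) := by
        intro b; rw [hj, hj, hxy]
      have h2 : ∀ c : A, B (u x - u y) c = 0 := by
        intro c
        obtain ⟨b, rfl⟩ := hsurj c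
        simp [map_sub, LinearMap.sub_apply, h1 b]
      have := hndl _ h2
      exact hinj (sub_eq_zero.mp this)
    · intro hjU
      have hinj : Function.Injective u := by
        intro x y hxy
        have h2 : ∀ b : A, B (j * (x - y)) b = 0 := by
          intro b
          rw [← hj]
          simp [map_sub, hxy]
        have h3 : j * (x - y) = 0 := hndl _ h2
        obtain ⟨jU, rfl⟩ := hjU
        have : (x - y) = 0 := by
          have := congrArg (((jU⁻¹ : Aˣ) : A) * ·) h3
          simpa [← mul_assoc] using this
        exact sub_eq_zero.mp this
      exact ⟨hinj, (LinearMap.injective_iff_surjective (f := u.toLinearMap)).mp hinj⟩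
  · intro v hvu jinv hjinv jU hjU
    have key : ∀ b : A, B (j * v.symm jinv) b = B 1 b := by
      intro b
      have h1 := hjinv (v 1) (v b)
      simp only [AlgEquiv.symm_apply_apply] at h1
      have h2 : jinv * v 1 = v (v.symm jinv * 1) := by
        simp [map_mul]
      rw [h2, hvu, hvu, hj] at h1
      rw [mul_one] at h1
      exact h1.symm
    have h3 : j * v.symm jinv = 1 := by
      apply sub_eq_zero.mp
      apply hndl
      intro b
      simp [map_sub, LinearMap.sub_apply, key b]
    have h4 : v.symm jinv = ((jU⁻¹ : Aˣ) : A) := by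
      subst hjU
      have := congrArg (((jU⁻¹ : Aˣ) : A) * ·) h3
      simpa [← mul_assoc, Units.inv_mul, one_mul] using this
    calc jinv = v (v.symm jinv) := by rw [AlgEquiv.apply_symm_apply]
      _ = u (((jU⁻¹ : Aˣ) : A)) := by rw [h4, hvu]
end

section
/- Let A be a Frobenius algebra with Nakayama automorphism σ and u an automorphism of A. Then for all a ∈ A one has jac(u)·u⁻¹(σ⁻¹(a)) = σ⁻¹(u⁻¹(a))·jac(u). -/
/-- For an automorphism u of a Frobenius algebra with Nakayama automorphism σ:
jac(u)·u⁻¹(σ⁻¹(a)) = σ⁻¹(u⁻¹(a))·jac(u) for all a. -/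
theorem nakayama_jacobian_commutation
    (k : Type*) [Field k] (A : Type*) [Ring A] [Algebra k A] [FiniteDimensional k A]
    (B : A →ₗ[k] A →ₗ[k] k)
    (hndl : ∀ a : A, (∀ b : A, B a b = 0) → a = 0)
    (hndr : ∀ b : A, (∀ a : A, B a b = 0) → b = 0)
    (hassoc : ∀ a b c : A, B (a * b) c = B a (b * c))
    (σ : A ≃ₐ[k] A) (hσ : ∀ a b : A, B a b = B b (σ a))
    (u : A ≃ₐ[k] A) (j : A)
    (hj : ∀ a b : A, B (u a) (u b) = B (j * a) b) :
    ∀ a : A, j * u.symm (σ.symm a) = σ.symm (u.symm a) * j := by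
  intro a
  have key : ∀ b : A, B (j * u.symm (σ.symm a)) b = B (σ.symm (u.symm a) * j) b := by
    intro b
    have h1 : B (j * u.symm (σ.symm a)) b = B (u b) a := by
      rw [← hj, u.apply_symm_apply, hσ (σ.symm a) (u b), σ.apply_symm_apply]
    have h2 : B (σ.symm (u.symm a) * j) b = B (u b) a := by
      rw [hassoc, hσ (σ.symm (u.symm a)) (j * b), σ.apply_symm_apply, ← hj,
        u.apply_symm_apply]
    rw [h1, h2]
  have h := hndl (j * u.symm (σ.symm a) - σ.symm (u.symm a) * j) (fun b => by
    rw [map_sub, LinearMap.sub_apply, key b, sub_self])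
  exact sub_eq_zero.mp h
end

section
/- Let A be a Frobenius algebra with Nakayama automorphism σ. An automorphism u of A commutes with σ if and only if its Nakayama Jacobian jac(u) is central in A. -/
/-- An automorphism u of a Frobenius algebra commutes with the Nakayama
automorphism σ iff its Nakayama Jacobian is central. -/
theorem nakayama_jacobian_central_iff_commutes
    (k : Type*) [Field k] (A : Type*) [Ring A] [Algebra k A] [FiniteDimensional k A]
    (B : A →ₗ[k] A →ₗ[k] k)
    (hndl : ∀ a : A, (∀ b : A, B a b = 0) → a = 0)
    (hndr : ∀ b : A, (∀ a : A, B a b = 0) → b = 0)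
    (hassoc : ∀ a b c : A, B (a * b) c = B a (b * c))
    (σ : A ≃ₐ[k] A) (hσ : ∀ a b : A, B a b = B b (σ a))
    (u : A ≃ₐ[k] A) (j : A)
    (hj : ∀ a b : A, B (u a) (u b) = B (j * a) b) :
    (∀ a : A, σ (u a) = u (σ a)) ↔ j ∈ Set.center A := by
  have key1 : ∀ a b : A, B (a * j) b = B (u b) (u (σ a)) := by
    intro a b
    rw [hassoc, hσ, ← hj]
  have key2 : ∀ a b : A, B (j * a) b = B (u b) (σ (u a)) := by
    intro a b
    rw [← hj, hσ]
  constructor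
  · intro h
    rw [Semigroup.mem_center_iff]
    intro g
    have hz : ∀ b : A, B (g * j - j * g) b = 0 := by
      intro b
      rw [map_sub, LinearMap.sub_apply, key1, key2, h, sub_self]
    exact sub_eq_zero.mp (hndl _ hz)
  · intro hc a
    have hc' : j * a = a * j := (Semigroup.mem_center_iff.mp hc a).symm
    have hz : ∀ c : A, B c (σ (u a) - u (σ a)) = 0 := by
      intro c
      obtain ⟨b, rfl⟩ : ∃ b, c = u b := ⟨u.symm c, (u.apply_symm_apply c).symm⟩
      rw [map_sub, ← key2, ← key1, hc', sub_self]
    exact sub_eq_zero.mp (hndr _ hz)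
end

section
/- Let A be a Frobenius algebra with Nakayama automorphism σ. Then jac(σⁿ) = 1 for every integer n; and for any automorphism u, jac(σ ∘ u) = jac(u) and jac(u ∘ σ) = σ⁻¹(jac(u)). -/
/-- jac(σⁿ) = 1 for all integers n; jac(σ ∘ u) = jac(u) and
jac(u ∘ σ) = σ⁻¹(jac(u)) for all automorphisms u. -/
theorem nakayama_jacobian_of_powers
    (k : Type*) [Field k] (A : Type*) [Ring A] [Algebra k A] [FiniteDimensional k A]
    (B : A →ₗ[k] A →ₗ[k] k)
    (hndl : ∀ a : A, (∀ b : A, B a b = 0) → a = 0)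
    (hndr : ∀ b : A, (∀ a : A, B a b = 0) → b = 0)
    (hassoc : ∀ a b c : A, B (a * b) c = B a (b * c))
    (σ : A ≃ₐ[k] A) (hσ : ∀ a b : A, B a b = B b (σ a)) :
    (∀ (n : ℤ) (j : A), (∀ a b : A, B ((σ ^ n) a) ((σ ^ n) b) = B (j * a) b) → j = 1) ∧
      ∀ (u : A ≃ₐ[k] A) (ju j1 j2 : A),
        (∀ a b : A, B (u a) (u b) = B (ju * a) b) →
        (∀ a b : A, B (σ (u a)) (σ (u b)) = B (j1 * a) b) →
        (∀ a b : A, B (u (σ a)) (u (σ b)) = B (j2 * a) b) →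
        j1 = ju ∧ j2 = σ.symm ju := by
  -- σ preserves B
  have presσ : ∀ a b : A, B (σ a) (σ b) = B a b := by
    intro a b
    rw [← hσ b (σ a), ← hσ a b]
  have presσinv : ∀ a b : A, B (σ.symm a) (σ.symm b) = B a b := by
    intro a b
    have := presσ (σ.symm a) (σ.symm b)
    simpa using this.symm
  -- extraction: equal pairings give equality
  have extract : ∀ j c : A, (∀ b : A, B j b = B c b) → j = c := by
    intro j c h
    have hz : j - c = 0 := by
      apply hndl
      intro b
      have := h b
      simp only [map_sub, LinearMap.sub_apply, this, sub_self]
    exact sub_eq_zero.mp hz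
  -- powers preserve B
  have presn : ∀ n : ℕ, ∀ a b : A, B ((σ ^ n) a) ((σ ^ n) b) = B a b := by
    intro n
    induction n with
    | zero => intro a b; simp
    | succ m ih =>
      intro a b
      rw [pow_succ]
      have : ∀ x, ((σ ^ m * σ) : A ≃ₐ[k] A) x = (σ ^ m) (σ x) := fun x => rfl
      rw [this, this, ih, presσ]
  have presz : ∀ n : ℤ, ∀ a b : A, B ((σ ^ n) a) ((σ ^ n) b) = B a b := by
    intro n
    cases n with
    | ofNat m => simpa [zpow_natCast] using presn m
    | negSucc m =>
      intro a b
      have h1 : (σ ^ Int.negSucc m : A ≃ₐ[k] A) = (σ ^ (m + 1) : A ≃ₐ[k] A)⁻¹ := by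
        rw [zpow_negSucc]
      have h2 : ∀ x, ((σ ^ (m + 1) : A ≃ₐ[k] A)⁻¹) x = (σ ^ (m + 1) : A ≃ₐ[k] A).symm x :=
        fun x => rfl
      rw [h1, h2, h2]
      have := presn (m + 1) ((σ ^ (m + 1) : A ≃ₐ[k] A).symm a)
        ((σ ^ (m + 1) : A ≃ₐ[k] A).symm b)
      simpa using this.symm
  constructor
  · intro n j h
    apply extract
    intro b
    have := h 1 b
    rw [presz n 1 b, mul_one] at this
    simpa using this.symm
  · intro u ju j1 j2 hu h1 h2
    constructor
    · apply extract
      intro b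
      have e1 := h1 1 b
      have e2 := hu 1 b
      rw [mul_one] at e1 e2
      rw [presσ] at e1
      rw [← e1, e2]
    · apply extract
      intro b
      have e2 := h2 1 b
      rw [mul_one, map_one] at e2
      -- B (u (σ 1)) (u (σ b)) : σ 1 = 1
      have e3 := hu 1 (σ b)
      rw [mul_one] at e3
      -- e2 : B (u 1) (u (σ b)) = B j2 b ; e3 : B (u 1) (u (σ b)) = B ju (σ b)
      have e4 : B j2 b = B ju (σ b) := by rw [← e2, e3]
      have e5 : B ju (σ b) = B (σ.symm ju) b := by
        have := presσ (σ.symm ju) b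
        simpa using this
      rw [e4, e5]
end

section
/- Let A be a Frobenius algebra with Nakayama automorphism σ and let s be a unit of A. The Nakayama Jacobian of the inner automorphism ι_s: a ↦ s a s⁻¹ is jac(ι_s) = σ⁻¹(s⁻¹)·s. -/
/-- The Nakayama Jacobian of the inner automorphism ι_s is σ⁻¹(s⁻¹)·s. -/
theorem nakayama_jacobian_inner
    (k : Type*) [Field k] (A : Type*) [Ring A] [Algebra k A] [FiniteDimensional k A]
    (B : A →ₗ[k] A →ₗ[k] k)
    (hndl : ∀ a : A, (∀ b : A, B a b = 0) → a = 0)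
    (hndr : ∀ b : A, (∀ a : A, B a b = 0) → b = 0)
    (hassoc : ∀ a b c : A, B (a * b) c = B a (b * c))
    (σ : A ≃ₐ[k] A) (hσ : ∀ a b : A, B a b = B b (σ a))
    (s : Aˣ) (j : A)
    (hj : ∀ a b : A,
      B ((s : A) * a * ((s⁻¹ : Aˣ) : A)) ((s : A) * b * ((s⁻¹ : Aˣ) : A)) = B (j * a) b) :
    j = σ.symm ((s⁻¹ : Aˣ) : A) * (s : A) := by
  have key : ∀ b : A, B (j - σ.symm ((s⁻¹ : Aˣ) : A) * (s : A)) b = 0 := by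
    intro b
    have h1 := hj 1 b
    rw [mul_one, mul_one, Units.mul_inv] at h1
    have h2 := hassoc 1 ((s : A) * b) ((s⁻¹ : Aˣ) : A)
    rw [one_mul] at h2
    have h3 := hσ (σ.symm ((s⁻¹ : Aˣ) : A)) ((s : A) * b)
    rw [AlgEquiv.apply_symm_apply] at h3
    have h4 := hassoc (σ.symm ((s⁻¹ : Aˣ) : A)) (s : A) b
    have hjb : B j b = B (σ.symm ((s⁻¹ : Aˣ) : A) * (s : A)) b := by
      rw [← h1, ← h2, h4, h3]
    simp [map_sub, LinearMap.sub_apply, hjb]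
  exact sub_eq_zero.mp (hndl _ key)
end

section
/- Let A be a Frobenius algebra with forms ⟨·,·⟩ and ⟨·,·⟩′ related by ⟨a,b⟩′ = ⟨a,bt⟩ for a unit t, with Nakayama automorphisms σ and σ′, and set ξ := σ′⁻¹(t). Then for every automorphism u of A, jac_{σ′}(u) = ξ⁻¹ · jac_σ(u) · u⁻¹(ξ). Hence the map u ↦ jac_σ(u⁻¹) is a 1-cocycle on Aut(A) with values in A×, whose cohomology class is independent of the choice of form. -/
/-- Change-of-form law for Nakayama Jacobians: jac_{σ′}(u) = ξ⁻¹·jac_σ(u)·u⁻¹(ξ)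
with ξ = σ′⁻¹(t); hence u ↦ jac_σ(u⁻¹) is a 1-cocycle on Aut(A) with values in Aˣ
whose cohomology class is independent of the form. -/
theorem nakayama_jacobian_cocycle
    (k : Type*) [Field k] (A : Type*) [Ring A] [Algebra k A] [FiniteDimensional k A]
    (B B' : A →ₗ[k] A →ₗ[k] k)
    (hndl : ∀ a : A, (∀ b : A, B a b = 0) → a = 0)
    (hndr : ∀ b : A, (∀ a : A, B a b = 0) → b = 0)
    (hassoc : ∀ a b c : A, B (a * b) c = B a (b * c))
    (hndl' : ∀ a : A, (∀ b : A, B' a b = 0) → a = 0)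
    (hndr' : ∀ b : A, (∀ a : A, B' a b = 0) → b = 0)
    (hassoc' : ∀ a b c : A, B' (a * b) c = B' a (b * c))
    (t : Aˣ) (ht : ∀ a b : A, B' a b = B a (b * t))
    (σ' : A ≃ₐ[k] A) (hσ' : ∀ a b : A, B' a b = B' b (σ' a))
    (ξ : Aˣ) (hξ : (ξ : A) = σ'.symm (t : A)) :
    (∀ (u : A ≃ₐ[k] A) (j j' : A),
        (∀ a b : A, B (u a) (u b) = B (j * a) b) →
        (∀ a b : A, B' (u a) (u b) = B' (j' * a) b) →
        j' = ((ξ⁻¹ : Aˣ) : A) * j * u.symm (ξ : A)) ∧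
      ∀ J : (A ≃ₐ[k] A) → A,
        (∀ (w : A ≃ₐ[k] A) (a b : A), B (w.symm a) (w.symm b) = B (J w * a) b) →
        ∀ u v : A ≃ₐ[k] A, J (u * v) = J u * u (J v) := by
  have hσξ : σ' (ξ : A) = (t : A) := by rw [hξ, AlgEquiv.apply_symm_apply]
  constructor
  · intro u j j' hj hj'
    set c : A := ((ξ⁻¹ : Aˣ) : A) * j * u.symm (ξ : A) with hc
    -- key σ'-translation identity for B
    have key : ∀ a b : A, B a (b * t) = B b (σ' a * t) := by
      intro a b
      rw [← ht, ← ht, hσ']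
    -- B ξ x = B x t
    have hBξ : ∀ x : A, B (ξ : A) x = B x (t : A) := by
      intro x
      have h1 : x = (x * ((t⁻¹ : Aˣ) : A)) * (t : A) := by
        rw [mul_assoc, Units.inv_mul, mul_one]
      calc B (ξ : A) x = B (ξ : A) ((x * ((t⁻¹ : Aˣ) : A)) * (t : A)) := by rw [← h1]
        _ = B (x * ((t⁻¹ : Aˣ) : A)) (σ' (ξ : A) * (t : A)) := key _ _
        _ = B (x * ((t⁻¹ : Aˣ) : A)) ((t : A) * (t : A)) := by rw [hσξ]
        _ = B ((x * ((t⁻¹ : Aˣ) : A)) * (t : A)) (t : A) := (hassoc _ _ _).symm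
        _ = B x (t : A) := by rw [← h1]
    -- B' j' b = B (u b) t
    have hL : ∀ b : A, B' j' b = B (u b) (t : A) := by
      intro b
      have h1 := hj' 1 b
      simp only [map_one, mul_one, one_mul] at h1
      rw [← h1, ht, ← hassoc, one_mul]
    -- B' c b = B (u b) t
    have hσinv : σ' ((ξ⁻¹ : Aˣ) : A) * (t : A) = 1 := by
      rw [← hσξ, ← map_mul, Units.inv_mul, map_one]
    have hR : ∀ b : A, B' c b = B (u b) (t : A) := by
      intro b
      have step1 : B' c b = B (j * (u.symm (ξ : A) * b)) 1 := by
        rw [hc, mul_assoc, hassoc', hσ', ht, hσinv, mul_assoc]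
      have step2 : B (j * (u.symm (ξ : A) * b)) 1
          = B j (u.symm (ξ : A) * b) := by
        rw [hassoc, mul_one]
      have step3 : B j (u.symm (ξ : A) * b) = B 1 ((ξ : A) * u b) := by
        have := hj 1 (u.symm (ξ : A) * b)
        simp only [map_one, mul_one, one_mul] at this
        rw [← this, map_mul, AlgEquiv.apply_symm_apply]
      have step4 : B (1 : A) ((ξ : A) * u b) = B (ξ : A) (u b) := by
        rw [← hassoc, one_mul]
      rw [step1, step2, step3, step4, hBξ]
    have hzero : ∀ b : A, B' (j' - c) b = 0 := by
      intro b
      rw [map_sub, LinearMap.sub_apply, hL, hR, sub_self]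
    have := hndl' _ hzero
    exact sub_eq_zero.mp this
  · intro J hJ u v
    have hzero : ∀ b : A, B (J (u * v) - J u * u (J v)) b = 0 := by
      intro b
      have e1 := hJ (u * v) 1 b
      have e2 := hJ v (u.symm 1) (u.symm b)
      have e3 := hJ u (u (J v)) b
      have hcomp : ∀ x : A, (u * v).symm x = v.symm (u.symm x) := fun _ => rfl
      have harg : J v * u.symm (1 : A) = u.symm (u (J v) * 1) := by
        simp
      rw [hcomp, hcomp] at e1
      rw [harg] at e2
      simp only [mul_one] at e1 e2 e3 harg ⊢
      rw [map_sub, LinearMap.sub_apply, ← e1, e2, e3, sub_self]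
    have := hndl _ hzero
    exact sub_eq_zero.mp this
end

section
/- Let A = k[X]/(Xᵖ) over a field of characteristic p with the form ⟨xⁱ,xʲ⟩ = (−1)^{i+j} for i+j < p and 0 otherwise, and μ: A → k the linear map with μ(xⁱ) = (−1)ⁱ. For f ∈ rad A \ rad² A, the Nakayama Jacobian of the automorphism u_f (determined by u_f(x) = f) is jac(u_f) = μ(f^{p−1}) + Σ_{i=1}^{p−1} (μ(f^{p−1−i}) + μ(f^{p−i})) xⁱ. -/
/-- The truncated polynomial algebra k[X]/(Xᵖ). -/
abbrev TruncPoly (k : Type*) [Field k] (p : ℕ) :=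
  Polynomial k ⧸ Ideal.span {(Polynomial.X : Polynomial k) ^ p}

/-- The class of X in k[X]/(Xᵖ). -/
noncomputable abbrev truncPolyX (k : Type*) [Field k] (p : ℕ) : TruncPoly k p :=
  Ideal.Quotient.mk _ (Polynomial.X : Polynomial k)

set_option maxHeartbeats 1000000 in
/-- Jacobian of the automorphism u_f of A = k[X]/(Xᵖ) in characteristic p,
with respect to the symmetric form ⟨xⁱ,xʲ⟩ = (−1)^{i+j} for i+j < p (0 else):
jac(u_f) = μ(f^{p−1}) + Σ_{i=1}^{p−1}(μ(f^{p−1−i}) + μ(f^{p−i}))·xⁱ, where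
μ(xⁱ) = (−1)ⁱ. -/
theorem truncPoly_jacobian_formula
    (k : Type*) [Field k] (p : ℕ) (hp : p.Prime) [CharP k p]
    (B : TruncPoly k p →ₗ[k] TruncPoly k p →ₗ[k] k)
    (hB : ∀ i j : ℕ, i < p → j < p →
      B (truncPolyX k p ^ i) (truncPolyX k p ^ j) =
        if i + j < p then (-1 : k) ^ (i + j) else 0)
    (μ : TruncPoly k p →ₗ[k] k)
    (hμ : ∀ i : ℕ, i < p → μ (truncPolyX k p ^ i) = (-1 : k) ^ i)
    (f : TruncPoly k p)
    (hf : f ∈ Ideal.jacobson (⊥ : Ideal (TruncPoly k p)))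
    (hf2 : f ∉ (Ideal.jacobson (⊥ : Ideal (TruncPoly k p))) ^ 2)
    (u : TruncPoly k p ≃ₐ[k] TruncPoly k p) (hu : u (truncPolyX k p) = f)
    (j : TruncPoly k p)
    (hj : ∀ a b : TruncPoly k p, B (u a) (u b) = B (j * a) b) :
    j = algebraMap k (TruncPoly k p) (μ (f ^ (p - 1))) +
      ∑ i ∈ Finset.Ico 1 p, (μ (f ^ (p - 1 - i)) + μ (f ^ (p - i))) • truncPolyX k p ^ i := by
  have hp1 : 1 ≤ p := hp.one_lt.le
  set x : TruncPoly k p := truncPolyX k p with hxdef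
  -- x ^ p = 0
  have hxp : x ^ p = 0 := by
    show (Ideal.Quotient.mk _ (Polynomial.X : Polynomial k)) ^ p = 0
    rw [← map_pow, Ideal.Quotient.eq_zero_iff_mem]
    exact Ideal.subset_span rfl
  have hμ' : ∀ n : ℕ, μ (x ^ n) = if n < p then (-1 : k) ^ n else 0 := by
    intro n
    by_cases h : n < p
    · rw [if_pos h]; exact hμ n h
    · rw [if_neg h]
      have hz : x ^ n = 0 := by
        have h1 : x ^ n = x ^ p * x ^ (n - p) := by rw [← pow_add]; congr 1; omega
        rw [h1, hxp, zero_mul]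
      rw [hz, map_zero]
  -- (-1)^(p-1) = 1 in char p
  have hne : ((-1 : k) ^ (p - 1)) = 1 := by
    rcases hp.eq_two_or_odd' with h2 | hodd
    · subst h2
      have h2' : (2 : k) = 0 := CharP.cast_eq_zero k 2
      norm_num
      linear_combination -h2'
    · exact (Nat.Odd.sub_odd hodd odd_one).neg_one_pow
  -- power basis
  have hX0 : ((Polynomial.X : Polynomial k) ^ p) ≠ 0 := pow_ne_zero _ Polynomial.X_ne_zero
  let pb : PowerBasis k (TruncPoly k p) := AdjoinRoot.powerBasis hX0
  have hdim : pb.dim = p := by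
    simp [pb, AdjoinRoot.powerBasis, Polynomial.natDegree_X_pow]
  have hgen : pb.gen = x := rfl
  have hbasis : ∀ i : Fin pb.dim, pb.basis i = x ^ (i : ℕ) := by
    intro i; rw [pb.coe_basis, hgen]
  -- B a b = μ (a * b)
  have hBμ : ∀ a b : TruncPoly k p, B a b = μ (a * b) := by
    have hEq : B = (LinearMap.mul k (TruncPoly k p)).compr₂ μ := by
      apply pb.basis.ext; intro i
      apply pb.basis.ext; intro jj
      rw [hbasis, hbasis]
      have hi : (i : ℕ) < p := by have := i.isLt; omega
      have hj2 : (jj : ℕ) < p := by have := jj.isLt; omega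
      rw [hB _ _ hi hj2]
      simp only [LinearMap.compr₂_apply, LinearMap.mul_apply']
      rw [← pow_add, hμ']
    intro a b; rw [hEq]; rfl
  -- μ (u a) = μ (j * a)
  have hμu : ∀ a : TruncPoly k p, μ (u a) = μ (j * a) := by
    intro a
    have h := hj a 1
    rw [map_one, hBμ, hBμ, mul_one, mul_one] at h
    exact h
  -- key injectivity
  have key : ∀ z : TruncPoly k p, (∀ m, m < p → μ (z * x ^ m) = 0) → z = 0 := by
    intro z hz
    have hrep := pb.basis.sum_repr z
    set c := pb.basis.repr z with hc
    have hterm : ∀ m : ℕ, μ (z * x ^ m) = ∑ i : Fin pb.dim, c i * μ (x ^ ((i : ℕ) + m)) := by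
      intro m
      calc μ (z * x ^ m) = μ ((∑ i, c i • pb.basis i) * x ^ m) := by rw [hrep]
        _ = ∑ i, c i * μ (x ^ ((i : ℕ) + m)) := by
            rw [Finset.sum_mul, map_sum]
            refine Finset.sum_congr rfl fun i _ => ?_
            rw [hbasis, smul_mul_assoc, map_smul, smul_eq_mul, ← pow_add]
    have hc0 : ∀ n, ∀ hn : n < pb.dim, c ⟨n, hn⟩ = 0 := by
      intro n
      induction n using Nat.strong_induction_on with
      | _ n ih =>
        intro hn
        have hnp : n < p := by omega
        have hm := hz (p - 1 - n) (by omega)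
        rw [hterm] at hm
        rw [Finset.sum_eq_single (⟨n, hn⟩ : Fin pb.dim)] at hm
        · rw [hμ'] at hm
          have he : n + (p - 1 - n) = p - 1 := by omega
          rw [he, if_pos (by omega), hne, mul_one] at hm
          exact hm
        · intro b _ hb
          have hbne : (b : ℕ) ≠ n := fun h => hb (Fin.ext h)
          rcases lt_or_gt_of_ne hbne with hlt | hgt
          · have hcb : c b = 0 := by simpa using ih (b : ℕ) hlt b.isLt
            rw [hcb, zero_mul]
          · rw [hμ', if_neg (by omega), mul_zero]
        · intro habs; exact absurd (Finset.mem_univ _) habs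
    have hcz : c = 0 := Finsupp.ext fun i => by simpa using hc0 (i : ℕ) i.isLt
    exact pb.basis.repr.map_eq_zero_iff.mp (by rw [← hc]; exact hcz)
  -- coefficients
  obtain ⟨g, hg⟩ : ∃ g : ℕ → k, ∀ i, g i = μ (f ^ (p - 1 - i)) := ⟨_, fun _ => rfl⟩
  have hcoef : ∀ i : ℕ, 1 ≤ i → μ (f ^ (p - i)) = g (i - 1) := by
    intro i hi
    rw [hg]
    have he : p - i = p - 1 - (i - 1) := by omega
    rw [he]
  have hg0 : g 0 = μ (f ^ (p - 1)) := by rw [hg, Nat.sub_zero]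
  -- μ (RHS * x^m) = μ (f^m) for m < p
  have hRm : ∀ m, m < p →
      μ ((algebraMap k (TruncPoly k p) (μ (f ^ (p - 1))) +
        ∑ i ∈ Finset.Ico 1 p, (μ (f ^ (p - 1 - i)) + μ (f ^ (p - i))) • x ^ i) * x ^ m)
      = μ (f ^ m) := by
    intro m hm
    have hK1 : 1 ≤ p - m := by omega
    have hKp : p - m ≤ p := by omega
    have step1 : μ ((algebraMap k (TruncPoly k p) (μ (f ^ (p - 1))) +
        ∑ i ∈ Finset.Ico 1 p, (μ (f ^ (p - 1 - i)) + μ (f ^ (p - i))) • x ^ i) * x ^ m)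
        = g 0 * μ (x ^ m) +
          ∑ i ∈ Finset.Ico 1 p, (g i + g (i - 1)) * μ (x ^ (i + m)) := by
      rw [add_mul, Finset.sum_mul, map_add, map_sum]
      congr 1
      · rw [← Algebra.smul_def, map_smul, smul_eq_mul, hg0]
      · refine Finset.sum_congr rfl fun i hi => ?_
        rw [Finset.mem_Ico] at hi
        rw [smul_mul_assoc, map_smul, smul_eq_mul, ← pow_add, hg i, hcoef i hi.1]
    rw [step1]
    have hsplit : ∑ i ∈ Finset.Ico 1 p, (g i + g (i - 1)) * μ (x ^ (i + m)) =
        (∑ i ∈ Finset.Ico 1 (p - m), (g i + g (i - 1)) * μ (x ^ (i + m))) +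
        ∑ i ∈ Finset.Ico (p - m) p, (g i + g (i - 1)) * μ (x ^ (i + m)) :=
      (Finset.sum_Ico_consecutive _ hK1 hKp).symm
    rw [hsplit]
    have hzero : ∑ i ∈ Finset.Ico (p - m) p, (g i + g (i - 1)) * μ (x ^ (i + m)) = 0 := by
      refine Finset.sum_eq_zero fun i hi => ?_
      rw [Finset.mem_Ico] at hi
      rw [hμ', if_neg (by omega), mul_zero]
    rw [hzero, add_zero]
    have htel : ∑ i ∈ Finset.Ico 1 (p - m), (g i + g (i - 1)) * μ (x ^ (i + m)) =
        (-1 : k) ^ m * ((-1 : k) ^ (p - m - 1) * g (p - m - 1) - (-1 : k) ^ 0 * g 0) := by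
      rw [Finset.sum_Ico_eq_sum_range]
      have heach : ∀ i ∈ Finset.range (p - m - 1),
          (g (1 + i) + g (1 + i - 1)) * μ (x ^ (1 + i + m)) =
          (-1 : k) ^ m * ((-1 : k) ^ (i + 1) * g (i + 1) - (-1 : k) ^ i * g i) := by
        intro i hi
        rw [Finset.mem_range] at hi
        rw [hμ', if_pos (by omega)]
        have h1 : 1 + i - 1 = i := by omega
        have h2 : 1 + i = i + 1 := by omega
        rw [h1, h2]
        ring
      rw [show p - m - 1 = p - m - 1 from rfl]
      rw [Finset.sum_congr rfl heach, ← Finset.mul_sum,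
        Finset.sum_range_sub (fun i => (-1 : k) ^ i * g i)]
    rw [htel, hμ', if_pos hm]
    have hfin : g 0 * (-1 : k) ^ m +
        (-1 : k) ^ m * ((-1 : k) ^ (p - m - 1) * g (p - m - 1) - (-1 : k) ^ 0 * g 0) =
        (-1 : k) ^ (m + (p - m - 1)) * g (p - m - 1) := by
      rw [pow_add]; ring
    rw [hfin]
    have he1 : m + (p - m - 1) = p - 1 := by omega
    rw [he1, hne, one_mul, hg]
    have he2 : p - 1 - (p - m - 1) = m := by omega
    rw [he2]
  -- conclude
  rw [← sub_eq_zero]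
  refine key _ fun m hm => ?_
  rw [sub_mul, map_sub]
  have hjm : μ (j * x ^ m) = μ (f ^ m) := by rw [← hμu, map_pow, hu]
  rw [hjm, hRm m hm, sub_self]
end

section
/- Let A be a Frobenius algebra with Nakayama automorphism σ and δ: A → A a derivation. Then there is a unique element div(δ) ∈ A such that ⟨δ(a),b⟩ + ⟨a,δ(b)⟩ = ⟨a, b·div(δ)⟩ for all a,b ∈ A; moreover the derivation σ∘δ∘σ⁻¹ − δ equals the inner derivation a ↦ div(δ)·a − a·div(δ). In particular, if the form is symmetric then div(δ) is central. -/
/-- Existence and uniqueness of the Nakayama divergence of a derivation, the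
relation δ^σ − δ = ad(div δ), and centrality of div δ when the form is symmetric. -/
theorem nakayama_divergence_exists_unique
    (k : Type*) [Field k] (A : Type*) [Ring A] [Algebra k A] [FiniteDimensional k A]
    (B : A →ₗ[k] A →ₗ[k] k)
    (hndl : ∀ a : A, (∀ b : A, B a b = 0) → a = 0)
    (hndr : ∀ b : A, (∀ a : A, B a b = 0) → b = 0)
    (hassoc : ∀ a b c : A, B (a * b) c = B a (b * c))
    (σ : A ≃ₐ[k] A) (hσ : ∀ a b : A, B a b = B b (σ a))
    (δ : A →ₗ[k] A) (hder : ∀ a b : A, δ (a * b) = δ a * b + a * δ b) :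
    (∃! d : A, ∀ a b : A, B (δ a) b + B a (δ b) = B a (b * d)) ∧
      ∀ d : A, (∀ a b : A, B (δ a) b + B a (δ b) = B a (b * d)) →
        (∀ a : A, σ (δ (σ.symm a)) - δ a = d * a - a * d) ∧
        ((∀ a b : A, B a b = B b a) → d ∈ Set.center A) := by
  -- surjectivity of d ↦ B · d
  have hφinj : Function.Injective B.flip := by
    intro x y hxy
    have h0 : ∀ a : A, B a (x - y) = 0 := by
      intro a
      have := congrArg (fun f => f a) hxy
      simp only [LinearMap.flip_apply] at this
      simp [map_sub, this]
    exact sub_eq_zero.mp (hndr _ h0)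
  have hφsurj : Function.Surjective B.flip := by
    have h1 : Module.finrank k A = Module.finrank k (Module.Dual k A) :=
      (Subspace.dual_finrank_eq).symm
    exact (LinearMap.injective_iff_surjective_of_finrank_eq_finrank h1).mp hφinj
  obtain ⟨d, hd⟩ := hφsurj ((B.flip 1).comp δ)
  have hdprop : ∀ c : A, B c d = B (δ c) 1 := by
    intro c
    have := congrArg (fun f => f c) hd
    simp only [LinearMap.flip_apply, LinearMap.comp_apply] at this
    exact this
  have hdmain : ∀ a b : A, B (δ a) b + B a (δ b) = B a (b * d) := by
    intro a b
    have h1 : B a (b * d) = B (a * b) d := (hassoc a b d).symm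
    rw [h1, hdprop, hder, map_add, LinearMap.add_apply, hassoc, hassoc, mul_one, mul_one]
  constructor
  · refine ⟨d, hdmain, ?_⟩
    intro d' hd'
    have h0 : ∀ a : A, B a (d' - d) = 0 := by
      intro a
      have h1 := hd' a 1
      have h2 := hdmain a 1
      rw [one_mul] at h1 h2
      have h3 : B a d' = B a d := by linear_combination h2 - h1
      simp [map_sub, h3]
    exact sub_eq_zero.mp (hndr _ h0)
  · intro d hd
    have key : ∀ a : A, σ (δ (σ.symm a)) - δ a = d * a - a * d := by
      intro a
      apply sub_eq_zero.mp
      apply hndr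
      intro x
      have e1 : B x (σ (δ (σ.symm a))) = B (δ (σ.symm a)) x := (hσ _ _).symm
      have e2 : B (δ (σ.symm a)) x = B (σ.symm a) (x * d) - B (σ.symm a) (δ x) := by
        linear_combination hd (σ.symm a) x
      have e3 : B (σ.symm a) (x * d) = B x (d * a) := by
        rw [hσ (σ.symm a) (x * d)]
        simp only [AlgEquiv.apply_symm_apply]
        exact hassoc x d a
      have e4 : B (σ.symm a) (δ x) = B x (a * d) - B x (δ a) := by
        rw [hσ (σ.symm a) (δ x)]
        simp only [AlgEquiv.apply_symm_apply]
        linear_combination hd x a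
      have expand : B x (σ (δ (σ.symm a)) - δ a - (d * a - a * d))
          = B x (σ (δ (σ.symm a))) - B x (δ a) - (B x (d * a) - B x (a * d)) := by
        simp [map_sub]
      rw [expand, e1, e2, e3, e4]
      ring
    refine ⟨key, ?_⟩
    intro hsym
    have hσid : ∀ a : A, σ a = a := by
      intro a
      apply sub_eq_zero.mp
      apply hndr
      intro b
      have h1 : B b (σ a) = B a b := (hσ a b).symm
      rw [map_sub, h1, hsym a b]
      ring
    rw [Semigroup.mem_center_iff]
    intro a
    have hk := key a
    have hsymm : σ.symm a = a := (σ.symm_apply_eq).mpr (hσid a).symm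
    rw [hσid, hsymm, sub_self] at hk
    exact (sub_eq_zero.mp hk.symm).symm
end

section
/- Let A be a Frobenius algebra with Nakayama automorphism σ. For x ∈ A, the Nakayama divergence of the inner derivation ad(x): a ↦ xa − ax is div(ad(x)) = σ(x) − x. Moreover, for any derivation δ and central element z of A, div(zδ) = z·div(δ) − δ(z). -/
/-- div(ad x) = σ(x) − x, and div(zδ) = z·div(δ) − δ(z) for z central. -/
theorem nakayama_divergence_inner_and_module
    (k : Type*) [Field k] (A : Type*) [Ring A] [Algebra k A] [FiniteDimensional k A]
    (B : A →ₗ[k] A →ₗ[k] k)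
    (hndl : ∀ a : A, (∀ b : A, B a b = 0) → a = 0)
    (hndr : ∀ b : A, (∀ a : A, B a b = 0) → b = 0)
    (hassoc : ∀ a b c : A, B (a * b) c = B a (b * c))
    (σ : A ≃ₐ[k] A) (hσ : ∀ a b : A, B a b = B b (σ a))
    (x : A) (dx : A)
    (hdx : ∀ a b : A, B (x * a - a * x) b + B a (x * b - b * x) = B a (b * dx))
    (z : A) (hz : z ∈ Set.center A)
    (δ : A →ₗ[k] A) (hder : ∀ a b : A, δ (a * b) = δ a * b + a * δ b)
    (dδ : A) (hdδ : ∀ a b : A, B (δ a) b + B a (δ b) = B a (b * dδ))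
    (dz : A) (hdz : ∀ a b : A, B (z * δ a) b + B a (z * δ b) = B a (b * dz)) :
    dx = σ x - x ∧ dz = z * dδ - δ z := by
  have hδ1 : δ 1 = 0 := by
    have h := hder 1 1
    simp only [mul_one, one_mul] at h
    exact left_eq_add.mp h
  have hzc : ∀ a : A, z * a = a * z := fun a => (Set.mem_center_iff.mp hz).comm a
  constructor
  · have key : ∀ a : A, B a (dx - (σ x - x)) = 0 := by
      intro a
      have h := hdx a 1
      rw [one_mul, mul_one] at h
      have h1 : B (x * a - a * x) 1 = B a (σ x) - B a x := by
        have e1 : B (x * a) 1 = B x a := by rw [hassoc, mul_one]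
        have e2 : B (a * x) 1 = B a x := by rw [hassoc, mul_one]
        simp only [map_sub, LinearMap.sub_apply, e1, e2, hσ x a]
      rw [sub_self, h1] at h
      simp only [map_sub, one_mul, map_zero, add_zero] at h ⊢
      linear_combination -h
    have := hndr _ (fun a => key a)
    exact sub_eq_zero.mp this
  · have key : ∀ a : A, B a (dz - (z * dδ - δ z)) = 0 := by
      intro a
      have h := hdz a 1
      rw [hδ1, mul_zero, map_zero, add_zero, one_mul] at h
      -- h : B (z * δ a) 1 = B a dz
      have h2 := hdδ (a * z) 1
      rw [hδ1, map_zero, add_zero, one_mul] at h2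
      -- h2 : B (δ (a*z)) 1 = B (a*z) dδ
      have hδaz : δ (a * z) = δ a * z + a * δ z := hder a z
      have e1 : B (δ a * z) 1 = B (z * δ a) 1 := by rw [hzc (δ a)]
      have e2 : B (a * δ z) 1 = B a (δ z) := by rw [hassoc, mul_one]
      have e3 : B (a * z) dδ = B a (z * dδ) := by rw [hassoc]
      rw [hδaz] at h2
      simp only [map_add, LinearMap.add_apply] at h2
      rw [e1, e2, e3, h] at h2
      -- h2 : B a dz + B a (δ z) = B a (z * dδ)
      simp only [map_sub]
      linear_combination h2
    have := hndr _ (fun a => key a)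
    exact sub_eq_zero.mp this
end

section
/- Let A be a Frobenius algebra and δ, η: A → A derivations. The Nakayama divergence satisfies div([δ,η]) = δ(div(η)) − η(div(δ)) + div(δ)·div(η) − div(η)·div(δ), where [δ,η] = δ∘η − η∘δ. -/
/-- Divergence of a commutator of derivations:
div([δ,η]) = δ(div η) − η(div δ) + [div δ, div η]. -/
theorem nakayama_divergence_bracket
    (k : Type*) [Field k] (A : Type*) [Ring A] [Algebra k A] [FiniteDimensional k A]
    (B : A →ₗ[k] A →ₗ[k] k)
    (hndl : ∀ a : A, (∀ b : A, B a b = 0) → a = 0)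
    (hndr : ∀ b : A, (∀ a : A, B a b = 0) → b = 0)
    (hassoc : ∀ a b c : A, B (a * b) c = B a (b * c))
    (δ η : A →ₗ[k] A)
    (hderδ : ∀ a b : A, δ (a * b) = δ a * b + a * δ b)
    (hderη : ∀ a b : A, η (a * b) = η a * b + a * η b)
    (dδ : A) (hdδ : ∀ a b : A, B (δ a) b + B a (δ b) = B a (b * dδ))
    (dη : A) (hdη : ∀ a b : A, B (η a) b + B a (η b) = B a (b * dη))
    (dc : A)
    (hdc : ∀ a b : A,
      B (δ (η a) - η (δ a)) b + B a (δ (η b) - η (δ b)) = B a (b * dc)) :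
    dc = δ dη - η dδ + (dδ * dη - dη * dδ) := by
  set c : A := δ dη - η dδ + (dδ * dη - dη * dδ) with hc
  have key : ∀ a b : A, B (δ (η a) - η (δ a)) b + B a (δ (η b) - η (δ b)) = B a (b * c) := by
    intro a b
    have e1 := hdδ (η a) b
    have e2 := hdη a (δ b)
    have e3 := hdη a (b * dδ)
    have e1' := hdη (δ a) b
    have e2' := hdδ a (η b)
    have e3' := hdδ a (b * dη)
    rw [hderη b dδ] at e3
    rw [hderδ b dη] at e3'
    have m1 := congrArg (B a) (mul_assoc b dδ dη)
    have m2 := congrArg (B a) (mul_assoc b dη dδ)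
    simp only [hc, mul_add, mul_sub, map_add, map_sub, LinearMap.sub_apply] at *
    linear_combination e1 - e2 + e3 - e1' + e2' - e3' + m1 - m2
  have hz : dc - c = 0 := by
    apply hndr
    intro a
    have h : B a (1 * dc) = B a (1 * c) := (hdc a 1).symm.trans (key a 1)
    rw [one_mul, one_mul] at h
    rw [map_sub, h, sub_self]
  exact sub_eq_zero.mp hz
end
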